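/- Let (T t)_{t≥0} be a C₀-semigroup on a separable complex Banach space B. Define B₀ = {f ∈ B : T t f → 0 as t → ∞} and B_∞ = {f ∈ B : for every ε > 0 there exist g ∈ B and t ≥ 0 with ‖g‖ < ε and ‖T t g − f‖ < ε}. If both B₀ and B_∞ are dense in B, then T is hypercyclic, i.e. there exists f ∈ B whose orbit {T t f : t ≥ 0} is dense in B. -/

import Mathlib

/-!
By the Baire category theorem, a family of continuous self-maps of a separable Baire space
has a dense orbit as soon as, for all nonempty open `U` and `V`, some map of the family
sends a point of `V` into `U`. For the semigroup, given open `U ∋ y` and `V ∋ v`, take `f₀ ∈ B₀` near `v` and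
`y' ∈ B_∞` near `y`, and a small `g` with `T t g ≈ y'`; then `f₀ + g ∈ V` and
`T t (f₀ + g) ∈ U`, provided `t` is so large that `T t f₀ ≈ 0`. Such a `t` is
forced by the local boundedness of `t ↦ ‖T t‖` (Banach–Steinhaus): on a bounded time
interval a small `g` cannot be mapped close to `y' ≠ 0`.
-/

open Set Filter Topology

theorem exists_denseRange_orbit_of_transitive {X ι : Type*} [TopologicalSpace X]
    [BaireSpace X] [SecondCountableTopology X] [Nonempty X] (φ : ι → X → X)
    (hφ : ∀ i, Continuous (φ i))
    (htrans : ∀ U V : Set X, IsOpen U → IsOpen V → U.Nonempty → V.Nonempty →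
      ∃ i, (V ∩ φ i ⁻¹' U).Nonempty) :
    ∃ x, DenseRange fun i => φ i x := by
  obtain ⟨b, hbc, hbne, hb⟩ := TopologicalSpace.exists_countable_basis X
  have hopen : ∀ U ∈ b, IsOpen (⋃ i, φ i ⁻¹' U) := fun U hU =>
    isOpen_iUnion fun i => (hb.isOpen hU).preimage (hφ i)
  have hdense : ∀ U ∈ b, Dense (⋃ i, φ i ⁻¹' U) := by
    intro U hU
    refine dense_iff_inter_open.2 fun V hV hVne => ?_
    obtain ⟨i, x, hxV, hxU⟩ :=
      htrans U V (hb.isOpen hU) hV (nonempty_iff_ne_empty.2 fun h => hbne (h ▸ hU)) hVne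
    exact ⟨x, hxV, mem_iUnion.2 ⟨i, hxU⟩⟩
  obtain ⟨x, hx⟩ := (dense_biInter_of_isOpen hopen hbc hdense).nonempty
  refine ⟨x, hb.dense_iff.2 fun U hU _ => ?_⟩
  obtain ⟨i, hi⟩ := mem_iUnion.1 (mem_iInter₂.1 hx U hU)
  exact ⟨φ i x, hi, i, rfl⟩

section Semigroup

variable {𝕜 E : Type*} [NontriviallyNormedField 𝕜] [NormedAddCommGroup E] [NormedSpace 𝕜 E]

theorem IsCompact.exists_bound_opNorm_of_continuousOn [CompleteSpace E] {α F : Type*}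
    [TopologicalSpace α] [SeminormedAddCommGroup F] [NormedSpace 𝕜 F] {K : Set α}
    (hK : IsCompact K) {T : α → E →L[𝕜] F} (hT : ∀ x, ContinuousOn (fun t => T t x) K) :
    ∃ C, ∀ t ∈ K, ‖T t‖ ≤ C := by
  obtain ⟨C, hC⟩ := banach_steinhaus (g := fun t : K => T t) fun x => by
    obtain ⟨c, hc⟩ := hK.exists_bound_of_continuousOn (hT x)
    exact ⟨c, fun t => hc t t.2⟩
  exact ⟨C, fun t ht => hC ⟨t, ht⟩⟩

def tendstoZeroSet (T : ℝ → E →L[𝕜] E) : Set E :=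
  {f | Tendsto (fun t => T t f) atTop (𝓝 0)}

def approxReachableSet (T : ℝ → E →L[𝕜] E) : Set E :=
  {f | ∀ ε : ℝ, 0 < ε → ∃ g : E, ∃ t : ℝ, 0 ≤ t ∧ ‖g‖ < ε ∧ ‖T t g - f‖ < ε}

variable [CompleteSpace E] {T : ℝ → E →L[𝕜] E}

theorem exists_late_of_mem_approxReachableSet
    (hT : ∀ x, ContinuousOn (fun t => T t x) (Ici 0)) {f : E} (hf : f ∈ approxReachableSet T)
    (M : ℝ) {ε : ℝ} (hε : 0 < ε) :
    ∃ g : E, ∃ t : ℝ, M ≤ t ∧ 0 ≤ t ∧ ‖g‖ < ε ∧ ‖T t g - f‖ < ε := by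
  rcases eq_or_ne f 0 with rfl | hf0
  · exact ⟨0, max M 0, le_max_left _ _, le_max_right _ _, by simpa using hε, by simpa using hε⟩
  obtain ⟨C, hC⟩ := isCompact_Icc.exists_bound_opNorm_of_continuousOn
    fun x => (hT x).mono (Icc_subset_Ici_self : Icc 0 M ⊆ Ici 0)
  have hfpos : 0 < ‖f‖ := norm_pos_iff.2 hf0
  set ε' := min ε (‖f‖ / (2 * (|C| + 1)))
  have hε' : 0 < ε' := lt_min hε (by positivity)
  obtain ⟨g, t, ht0, hg, hTg⟩ := hf ε' hε'
  refine ⟨g, t, ?_, ht0, hg.trans_le (min_le_left _ _), hTg.trans_le (min_le_left _ _)⟩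
  by_contra! htM
  have hsmall : ‖T t g‖ ≤ |C| * ε' := calc
    ‖T t g‖ ≤ ‖T t‖ * ‖g‖ := (T t).le_opNorm g
    _ ≤ |C| * ε' := mul_le_mul ((hC t ⟨ht0, htM.le⟩).trans (le_abs_self C)) hg.le
        (norm_nonneg _) (abs_nonneg C)
  have hε'f : (|C| + 1) * ε' ≤ ‖f‖ / 2 := by
    calc (|C| + 1) * ε' ≤ (|C| + 1) * (‖f‖ / (2 * (|C| + 1))) := by gcongr; exact min_le_right _ _
      _ = ‖f‖ / 2 := by field_simp
  linarith [norm_le_norm_add_norm_sub (T t g) f]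

theorem exists_inter_preimage_nonempty_of_dense
    (hT : ∀ x, ContinuousOn (fun t => T t x) (Ici 0))
    (h₀ : Dense (tendstoZeroSet T)) (hInfty : Dense (approxReachableSet T))
    {U V : Set E} (hU : IsOpen U) (hV : IsOpen V) (hUne : U.Nonempty) (hVne : V.Nonempty) :
    ∃ t : Ici (0 : ℝ), (V ∩ T t ⁻¹' U).Nonempty := by
  obtain ⟨y, hyU⟩ := hUne
  obtain ⟨v, hvV⟩ := hVne
  obtain ⟨r, hr, hrU⟩ := Metric.isOpen_iff.1 hU y hyU
  obtain ⟨δ, hδ, hδV⟩ := Metric.isOpen_iff.1 hV v hvV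
  obtain ⟨f₀, hf₀, hf₀v⟩ := h₀.exists_dist_lt v (half_pos hδ)
  obtain ⟨y', hy', hy'y⟩ := hInfty.exists_dist_lt y (by positivity : 0 < r / 3)
  obtain ⟨M, hM⟩ := eventually_atTop.1 <|
    NormedAddGroup.tendsto_nhds_zero.1 hf₀ (r / 3) (by positivity)
  obtain ⟨g, t, htM, ht0, hg, hTg⟩ := exists_late_of_mem_approxReachableSet hT hy' M
    (lt_min (half_pos hδ) (by positivity : 0 < r / 3))
  refine ⟨⟨t, ht0⟩, f₀ + g, hδV ?_, hrU ?_⟩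
  · rw [dist_comm] at hf₀v
    calc dist (f₀ + g) v ≤ dist f₀ v + ‖g‖ := by
          rw [dist_eq_norm, dist_eq_norm, add_sub_right_comm]; exact norm_add_le _ _
      _ < δ / 2 + δ / 2 := add_lt_add hf₀v (hg.trans_le (min_le_left _ _))
      _ = δ := add_halves δ
  · rw [dist_comm] at hy'y
    calc dist (T t (f₀ + g)) y ≤ ‖T t f₀‖ + ‖T t g - y'‖ + dist y' y := by
          rw [map_add, dist_eq_norm, dist_eq_norm,
            show T t f₀ + T t g - y = T t f₀ + (T t g - y') + (y' - y) by abel]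
          exact norm_add₃_le
      _ < r / 3 + r / 3 + r / 3 := by
          gcongr
          · exact hM t htM
          · exact hTg.trans_le (min_le_right _ _)
      _ = r := by ring

end Semigroup

theorem dsw_hypercyclicity_criterion_general
    {B : Type*} [NormedAddCommGroup B] [NormedSpace ℂ B] [CompleteSpace B]
    [TopologicalSpace.SeparableSpace B]
    (T : ℝ → B →L[ℂ] B)
    (hTcont : ∀ g : B, ContinuousOn (fun t => T t g) (Set.Ici (0 : ℝ)))
    (h₀ : Dense {f : B | Filter.Tendsto (fun t => T t f) Filter.atTop (nhds 0)})
    (hInfty : Dense {f : B | ∀ ε : ℝ, 0 < ε →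
        ∃ g : B, ∃ t : ℝ, 0 ≤ t ∧ ‖g‖ < ε ∧ ‖T t g - f‖ < ε}) :
    ∃ f : B, Dense ((fun t => T t f) '' Set.Ici (0 : ℝ)) := by
  obtain ⟨f, hf⟩ := exists_denseRange_orbit_of_transitive (fun t : Ici (0 : ℝ) => ⇑(T t))
    (fun t => (T t).continuous) fun _ _ hU hV hUne hVne =>
      exists_inter_preimage_nonempty_of_dense hTcont h₀ hInfty hU hV hUne hVne
  exact ⟨f, by rwa [image_eq_range]⟩

/-- **Desch–Schappacher–Webb hypercyclicity criterion.** If for a C₀-semigroup on a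
separable complex Banach space both the set `B₀` of points whose orbit tends to `0` and
the set `B_∞` of points approximately reachable from arbitrarily small initial data are
dense, then the semigroup is hypercyclic. -/
theorem dsw_hypercyclicity_criterion
    {B : Type*} [NormedAddCommGroup B] [NormedSpace ℂ B] [CompleteSpace B]
    [TopologicalSpace.SeparableSpace B]
    (T : ℝ → B →L[ℂ] B)
    (hT0 : T 0 = 1)
    (hTadd : ∀ s t : ℝ, 0 ≤ s → 0 ≤ t → T (s + t) = (T s).comp (T t))
    (hTcont : ∀ g : B, ContinuousOn (fun t => T t g) (Set.Ici (0 : ℝ)))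
    (h₀ : Dense {f : B | Filter.Tendsto (fun t => T t f) Filter.atTop (nhds 0)})
    (hInfty : Dense {f : B | ∀ ε : ℝ, 0 < ε →
        ∃ g : B, ∃ t : ℝ, 0 ≤ t ∧ ‖g‖ < ε ∧ ‖T t g - f‖ < ε}) :
    ∃ f : B, Dense ((fun t => T t f) '' Set.Ici (0 : ℝ)) :=
  dsw_hypercyclicity_criterion_general T hTcont h₀ hInfty
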